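/- arXiv:2505.08363 — 2 statements merged into one kernel-verified Lean document; each statement's English description precedes it below -/
import Mathlib

section
/- Let p be an odd prime and N a positive integer divisible by p with N/p coprime to p. Then there exist infinitely many primes r such that r ≡ −1 (mod N) and r^(p−1) ≢ 1 (mod p²). -/
lemma aux_binom {R : Type*} [CommRing R] (a b : R) (h : b * b = 0) :
    ∀ n : ℕ, (a + b) ^ (n + 1) = a ^ (n + 1) + ((n : R) + 1) * a ^ n * b := by
  intro n
  induction n with
  | zero => ring
  | succ n ih =>
    have : (a + b) ^ (n + 2) = (a + b) ^ (n + 1) * (a + b) := by ring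
    rw [this, ih]
    push_cast
    linear_combination ((n : R) + 1) * a ^ n * h

/-- Let `p` be an odd prime and `N` a positive integer divisible by `p` with `N/p`
coprime to `p`. Then there exist infinitely many primes `r` with `r ≡ -1 (mod N)` and
`r^(p-1) ≢ 1 (mod p²)`. -/
theorem fermat_hasse_stmt3 (p N : ℕ) (hp : p.Prime) (hodd : Odd p) (hN : 0 < N)
    (hpN : p ∣ N) (hcop : Nat.Coprime (N / p) p) :
    {r : ℕ | r.Prime ∧ (r : ℤ) ≡ -1 [ZMOD (N : ℤ)] ∧
      ¬((r : ℤ) ^ (p - 1) ≡ 1 [ZMOD (p : ℤ) ^ 2])}.Infinite := by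
  have hp2 : 2 ≤ p := hp.two_le
  have hp3 : 3 ≤ p := by
    rcases hodd with ⟨k, hk⟩
    omega
  set m := N / p with hm
  have hNm : N = p * m := (Nat.mul_div_cancel' hpN).symm
  have hm1 : 1 ≤ m := by
    rcases Nat.eq_zero_or_pos m with h | h
    · rw [h, mul_zero] at hNm; omega
    · exact h
  have hcop2 : Nat.Coprime m (p ^ 2) := hcop.pow_right 2
  obtain ⟨b, hb1, hb2⟩ := Nat.chineseRemainder hcop2 (m - 1) (p - 1)
  set M := m * p ^ 2 with hM
  have hM0 : 0 < M := by positivity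
  haveI : NeZero M := ⟨by omega⟩
  have hbm : Nat.Coprime b m := by
    have := Nat.ModEq.gcd_eq hb1
    rw [Nat.Coprime, this]
    have h1 : m - 1 + 1 = m := by omega
    calc Nat.gcd (m - 1) m = Nat.gcd (m-1) (m-1+1) := by rw [h1]
    _ = 1 := by simpa using (Nat.coprime_succ_self (m-1)).symm
  have hbp : Nat.Coprime b (p ^ 2) := by
    have := Nat.ModEq.gcd_eq hb2
    rw [Nat.Coprime, this]
    have h1 : Nat.Coprime (p - 1) p := by
      have h2 : p - 1 + 1 = p := by omega
      calc Nat.gcd (p - 1) p = Nat.gcd (p-1) (p-1+1) := by rw [h2]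
      _ = 1 := by simpa using (Nat.coprime_succ_self (p-1)).symm
    exact h1.pow_right 2
  have hbM : Nat.Coprime b M := Nat.Coprime.mul_right hbm hbp
  have hunit : IsUnit ((b : ZMod M)) := (ZMod.isUnit_iff_coprime b M).mpr hbM
  have hinf := Nat.infinite_setOfPred_prime_and_eq_mod hunit
  refine hinf.mono ?_
  rintro r ⟨hrp, hr⟩
  have hrb : r ≡ b [MOD M] := (ZMod.natCast_eq_natCast_iff r b M).mp hr
  have hrbZ : (r : ℤ) ≡ (b : ℤ) [ZMOD (M : ℤ)] := Int.natCast_modEq_iff.mpr hrb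
  refine ⟨hrp, ?_, ?_⟩
  · -- r ≡ -1 mod N
    have hbm' : (b : ℤ) ≡ -1 [ZMOD (m : ℤ)] := by
      have h0 : (b : ℤ) ≡ ((m - 1 : ℕ) : ℤ) [ZMOD ((m : ℕ) : ℤ)] := Int.natCast_modEq_iff.mpr hb1
      have hms : ((m - 1 : ℕ) : ℤ) = (m : ℤ) - 1 := by
        rw [Nat.cast_sub hm1]; norm_num
      rw [hms] at h0
      refine h0.trans ?_
      have h1 : (m:ℤ) ≡ 0 [ZMOD (m:ℤ)] := Int.modEq_zero_iff_dvd.mpr dvd_rfl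
      simpa using h1.sub_right 1
    have hbp' : (b : ℤ) ≡ -1 [ZMOD (p : ℤ)] := by
      have h2 : (b : ℤ) ≡ ((p - 1 : ℕ) : ℤ) [ZMOD ((p ^ 2 : ℕ) : ℤ)] := Int.natCast_modEq_iff.mpr hb2
      have hdvd : ((p : ℕ) : ℤ) ∣ ((p ^ 2 : ℕ) : ℤ) := by
        exact_mod_cast (dvd_pow_self p (by norm_num) : p ∣ p ^ 2)
      have h3 : (b : ℤ) ≡ ((p - 1 : ℕ) : ℤ) [ZMOD (p : ℤ)] := h2.of_dvd hdvd
      have hps : ((p - 1 : ℕ) : ℤ) = (p : ℤ) - 1 := by rw [Nat.cast_sub (by omega : 1 ≤ p)]; norm_num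
      rw [hps] at h3
      refine h3.trans ?_
      have h1 : (p:ℤ) ≡ 0 [ZMOD (p:ℤ)] := Int.modEq_zero_iff_dvd.mpr dvd_rfl
      simpa using h1.sub_right 1
    have hrm : (r : ℤ) ≡ -1 [ZMOD (m : ℤ)] := by
      refine Int.ModEq.trans ?_ hbm'
      exact hrbZ.of_dvd (by exact_mod_cast (⟨p ^ 2, hM⟩ : m ∣ M))
    have hrp' : (r : ℤ) ≡ -1 [ZMOD (p : ℤ)] := by
      refine Int.ModEq.trans ?_ hbp'
      exact hrbZ.of_dvd (by exact_mod_cast (⟨m * p, by rw [hM]; ring⟩ : p ∣ M))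
    have hc : ((p : ℤ)).natAbs.Coprime ((m : ℤ)).natAbs := by
      simpa using hcop.symm
    have hfin := (Int.modEq_and_modEq_iff_modEq_mul hc).mp ⟨hrp', hrm⟩
    have hNpm : ((N : ℕ) : ℤ) = (p : ℤ) * (m : ℤ) := by exact_mod_cast congrArg (Nat.cast : ℕ → ℤ) hNm
    rw [hNpm]
    exact hfin
  · -- r^(p-1) ≢ 1 mod p^2
    intro hcon
    have hrp2 : r ≡ p - 1 [MOD p ^ 2] := by
      refine Nat.ModEq.trans ?_ hb2
      exact hrb.of_dvd ⟨m, by rw [hM]; ring⟩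
    have hcast : (r : ZMod (p ^ 2)) = ((p - 1 : ℕ) : ZMod (p ^ 2)) :=
      (ZMod.natCast_eq_natCast_iff _ _ _).mpr hrp2
    have hx : ((p - 1 : ℕ) : ZMod (p ^ 2)) = (p : ZMod (p ^ 2)) - 1 := by
      rw [Nat.cast_sub (by omega : 1 ≤ p)]; simp
    set x : ZMod (p ^ 2) := (p : ZMod (p ^ 2)) with hxdef
    have hx2 : x * x = 0 := by
      rw [hxdef, ← Nat.cast_mul, ← pow_two, ZMod.natCast_self]
    have hexp : p - 1 = (p - 2) + 1 := by omega
    have hbin := aux_binom (-1 : ZMod (p ^ 2)) x hx2 (p - 2)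
    have hcastp2 : ((p - 2 : ℕ) : ZMod (p ^ 2)) = x - 2 := by
      rw [Nat.cast_sub (by omega : 2 ≤ p)]; push_cast; rfl
    have heven : Even ((p - 2) + 1) := by
      rw [← hexp]; exact Nat.Odd.sub_odd hodd odd_one
    have hoddp2 : Odd (p - 2) := by
      rcases hodd with ⟨k, hk⟩
      exact ⟨k - 1, by omega⟩
    have hpow : (x - 1) ^ (p - 1) = 1 + x := by
      have h4 : x - 1 = -1 + x := by ring
      rw [h4, hexp, hbin, hcastp2, Even.neg_one_pow heven, Odd.neg_one_pow hoddp2]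
      linear_combination -hx2
    have hc1 : ((r : ℤ)) ^ (p - 1) ≡ 1 [ZMOD ((p ^ 2 : ℕ) : ℤ)] := by
      rw [show ((p ^ 2 : ℕ) : ℤ) = (p : ℤ) ^ 2 by push_cast; ring]
      exact hcon
    have hcon2 : ((r : ℤ) : ZMod (p ^ 2)) ^ (p - 1) = 1 := by
      have := (ZMod.intCast_eq_intCast_iff _ _ _).mpr hc1
      simpa using this
    rw [show ((r : ℤ) : ZMod (p ^ 2)) = (r : ZMod (p ^ 2)) by push_cast; rfl,
      hcast, hx, hpow] at hcon2
    have hx0 : x ≠ 0 := by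
      rw [hxdef, Ne, ZMod.natCast_eq_zero_iff]
      intro hdvd
      have := Nat.le_of_dvd (by omega) hdvd
      nlinarith
    exact hx0 (by linear_combination hcon2)
end

section
/- Let p ≥ 5 be a prime, K a field of characteristic 0, and b, c, b', c' ∈ K*. If c·b' and b/(c·c') are both p-th powers in K*, then the curves x^p + b y^p + c z^p = 0 and x^p + b' y^p + c' z^p = 0 are isomorphic over K. -/
/-- Let `p ≥ 5` be prime, `K` a field of characteristic zero and `b, c, b', c' ∈ Kˣ`.
If `c·b'` and `b/(c·c')` are `p`-th powers in `Kˣ`, then the plane curves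
`x^p + b y^p + c z^p = 0` and `x^p + b' y^p + c' z^p = 0` are isomorphic over `K`
(via a linear change of coordinates carrying one curve onto the other). -/
theorem fermat_hasse_stmt18 (p : ℕ) (hp : p.Prime) (h5 : 5 ≤ p)
    (K : Type*) [Field K] [CharZero K] (b c b' c' : K)
    (hb : b ≠ 0) (hc : c ≠ 0) (hb' : b' ≠ 0) (hc' : c' ≠ 0)
    (h1 : ∃ β : K, β ^ p = c * b') (h2 : ∃ γ : K, γ ^ p = b / (c * c')) :
    ∃ A : (Fin 3 → K) ≃ₗ[K] (Fin 3 → K), ∀ v : Fin 3 → K,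
      v 0 ^ p + b * v 1 ^ p + c * v 2 ^ p = 0 ↔
      (A v) 0 ^ p + b' * (A v) 1 ^ p + c' * (A v) 2 ^ p = 0 := by
  obtain ⟨β, hβ⟩ := h1
  obtain ⟨γ, hγ⟩ := h2
  have hβ0 : β ≠ 0 := by
    intro h
    rw [h, zero_pow hp.ne_zero] at hβ
    exact (mul_ne_zero hc hb') hβ.symm
  have hγ0 : γ ≠ 0 := by
    intro h
    rw [h, zero_pow hp.ne_zero] at hγ
    field_simp at hγ
    exact hb (by rw [← hγ]; ring)
  refine ⟨⟨⟨⟨fun v => ![β * v 2, v 0, γ * β * v 1], ?_⟩, ?_⟩,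
      fun w => ![w 1, w 2 / (γ * β), w 0 / β], ?_, ?_⟩, ?_⟩
  · intro u v; funext i; fin_cases i <;> simp <;> ring
  · intro a v; funext i; fin_cases i <;> simp <;> ring
  · intro v; funext i; fin_cases i <;> simp <;> field_simp <;> ring
  · intro w; funext i; fin_cases i <;> simp <;> field_simp <;> ring
  · intro v
    have key : (β * v 2) ^ p + b' * (v 0) ^ p + c' * (γ * β * v 1) ^ p
        = b' * (v 0 ^ p + b * v 1 ^ p + c * v 2 ^ p) := by
      have hγ' : γ ^ p * (c * c') = b := by rw [hγ]; field_simp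
      have hgb : (γ * β) ^ p = c * b' * γ ^ p := by rw [mul_pow, hβ]; ring
      rw [mul_pow, hβ, mul_pow, hgb, ← hγ']
      ring
    simp only [LinearEquiv.coe_mk, LinearMap.coe_mk, AddHom.coe_mk]
    simp only [Matrix.cons_val_zero, Matrix.cons_val_one, Matrix.head_cons,
      Matrix.cons_val_two, Matrix.tail_cons]
    rw [key]
    constructor
    · intro h; rw [h, mul_zero]
    · intro h; exact (mul_eq_zero.mp h).resolve_left hb'
end
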